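/- Let α > 0, r > 1 and n ∈ ℕ be such that α·r·(n+1)^r ≥ 3. Then ∫_{n+1}^∞ t·e^{−α t^r} dt ≤ (e^{−α (n+1)^r}/(α r (n+1)^{r−2}))·(1 + 2/(α r (n+1)^r − 2)). -/

import Mathlib

/-!
Since `t ↦ t ^ r` is convex for `r ≥ 1`, it lies above its tangent at `a = n + 1`, so on
`(a, ∞)` the integrand is dominated by `e^{β a - α a^r} t e^{-β t}` with `β = α r a^(r-1)`.
The latter integrates in closed form to `e^{-α a^r} (a / β + 1 / β ^ 2)
= e^{-α a^r} a ^ 2 / x * (1 + 1 / x)` with `x = α r a^r`, and `1 / x ≤ 2 / (x - 2)` once `x > 2`.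
-/

open MeasureTheory Real Filter Set Topology

theorem rpow_add_mul_sub_le_rpow {a t r : ℝ} (ha : 0 < a) (ht : 0 ≤ t) (hr : 1 ≤ r) :
    a ^ r + r * a ^ (r - 1) * (t - a) ≤ t ^ r := by
  have hbern := one_add_mul_self_le_rpow_one_add (s := t / a - 1)
    (by linarith [div_nonneg ht ha.le]) hr
  rw [add_sub_cancel, div_rpow ht ha.le, le_div_iff₀ (rpow_pos_of_pos ha r)] at hbern
  calc a ^ r + r * a ^ (r - 1) * (t - a) = (1 + r * (t / a - 1)) * a ^ r := by
        rw [rpow_sub_one ha.ne']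
        field_simp
    _ ≤ t ^ r := hbern

theorem exp_neg_mul_rpow_le {α a t r : ℝ} (hα : 0 ≤ α) (ha : 0 < a) (ht : 0 ≤ t) (hr : 1 ≤ r) :
    exp (-α * t ^ r) ≤
      exp (α * r * a ^ (r - 1) * a - α * a ^ r) * exp (-(α * r * a ^ (r - 1)) * t) := by
  rw [← exp_add, exp_le_exp]
  nlinarith [mul_le_mul_of_nonneg_left (rpow_add_mul_sub_le_rpow ha ht hr) hα]

section MulExpNegMul

variable {β : ℝ}

theorem hasDerivAt_neg_add_mul_exp_neg_mul (hβ : β ≠ 0) (x : ℝ) :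
    HasDerivAt (fun t => -((t / β + 1 / β ^ 2) * exp (-β * t))) (x * exp (-β * x)) x := by
  have hlin : HasDerivAt (fun t : ℝ => t / β + 1 / β ^ 2) (1 / β) x := by
    simpa [one_div] using ((hasDerivAt_id x).div_const β).add_const (1 / β ^ 2)
  have hexp : HasDerivAt (fun t : ℝ => exp (-β * t)) (-β * exp (-β * x)) x := by
    simpa [mul_comm] using ((hasDerivAt_id x).const_mul (-β)).exp
  refine (hlin.mul hexp).neg.congr_deriv ?_
  field_simp
  ring

theorem tendsto_neg_add_mul_exp_neg_mul_atTop (hβ : 0 < β) :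
    Tendsto (fun t => -((t / β + 1 / β ^ 2) * exp (-β * t))) atTop (𝓝 0) := by
  have hmul : Tendsto (fun t : ℝ => t * exp (-β * t)) atTop (𝓝 0) := by
    simpa using tendsto_rpow_mul_exp_neg_mul_atTop_nhds_zero 1 β hβ
  have hexp : Tendsto (fun t : ℝ => exp (-β * t)) atTop (𝓝 0) :=
    tendsto_exp_atBot.comp (tendsto_id.const_mul_atTop_of_neg (neg_neg_of_pos hβ))
  convert ((hmul.div_const β).add (hexp.div_const (β ^ 2))).neg using 2
  · ring
  · simp

theorem integrableOn_Ioi_mul_exp_neg_mul {a : ℝ} (ha : 0 ≤ a) (hβ : 0 < β) :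
    IntegrableOn (fun t => t * exp (-β * t)) (Ioi a) :=
  integrableOn_Ioi_deriv_of_nonneg' (fun x _ => hasDerivAt_neg_add_mul_exp_neg_mul hβ.ne' x)
    (fun _ ht => mul_nonneg (ha.trans ht.le) (exp_pos _).le)
    (tendsto_neg_add_mul_exp_neg_mul_atTop hβ)

theorem integral_Ioi_mul_exp_neg_mul {a : ℝ} (ha : 0 ≤ a) (hβ : 0 < β) :
    ∫ t in Ioi a, t * exp (-β * t) = (a / β + 1 / β ^ 2) * exp (-β * a) := by
  rw [integral_Ioi_of_hasDerivAt_of_tendsto'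
    (fun x _ => hasDerivAt_neg_add_mul_exp_neg_mul hβ.ne' x)
    (integrableOn_Ioi_mul_exp_neg_mul ha hβ) (tendsto_neg_add_mul_exp_neg_mul_atTop hβ)]
  ring

end MulExpNegMul

theorem integral_Ioi_mul_exp_neg_mul_rpow_le {α a r : ℝ} (hα : 0 < α) (ha : 0 < a) (hr : 1 ≤ r) :
    ∫ t in Ioi a, t * exp (-α * t ^ r) ≤
      exp (-α * a ^ r) * (a / (α * r * a ^ (r - 1)) + 1 / (α * r * a ^ (r - 1)) ^ 2) := by
  set β := α * r * a ^ (r - 1)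
  have hβ : 0 < β := by positivity
  calc ∫ t in Ioi a, t * exp (-α * t ^ r)
      ≤ ∫ t in Ioi a, exp (β * a - α * a ^ r) * (t * exp (-β * t)) := by
        refine integral_mono_of_nonneg ?_
          ((integrableOn_Ioi_mul_exp_neg_mul ha.le hβ).const_mul _) ?_
        · filter_upwards [self_mem_ae_restrict measurableSet_Ioi] with t ht
          exact mul_nonneg (ha.trans ht).le (exp_pos _).le
        · filter_upwards [self_mem_ae_restrict measurableSet_Ioi] with t ht
          have ht0 : 0 ≤ t := (ha.trans ht).le
          calc t * exp (-α * t ^ r) ≤ t * (exp (β * a - α * a ^ r) * exp (-β * t)) :=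
                mul_le_mul_of_nonneg_left (exp_neg_mul_rpow_le hα.le ha ht0 hr) ht0
            _ = _ := by ring
    _ = exp (-α * a ^ r) * (a / β + 1 / β ^ 2) := by
        have hK : exp (β * a - α * a ^ r) * exp (-β * a) = exp (-α * a ^ r) := by
          rw [← exp_add]
          ring_nf
        rw [integral_const_mul, integral_Ioi_mul_exp_neg_mul ha.le hβ, ← hK]
        ring

theorem one_div_le_two_div_sub_two {x : ℝ} (hx : 2 < x) : 1 / x ≤ 2 / (x - 2) := by
  rw [div_le_div_iff₀ (by linarith) (by linarith)]
  linarith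

theorem integral_t_exp_bound (α r : ℝ) (hα : 0 < α) (hr : 1 < r) (n : ℕ)
    (h : 3 ≤ α * r * ((n : ℝ) + 1) ^ r) :
    ∫ t in Set.Ioi ((n : ℝ) + 1), t * Real.exp (-α * t ^ r) ≤
      Real.exp (-α * ((n : ℝ) + 1) ^ r) / (α * r * ((n : ℝ) + 1) ^ (r - 2)) *
        (1 + 2 / (α * r * ((n : ℝ) + 1) ^ r - 2)) := by
  set a : ℝ := (n : ℝ) + 1
  have ha : 0 < a := by positivity
  have hclosed : a / (α * r * a ^ (r - 1)) + 1 / (α * r * a ^ (r - 1)) ^ 2 =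
      1 / (α * r * a ^ (r - 2)) * (1 + 1 / (α * r * a ^ r)) := by
    rw [rpow_sub_one ha.ne', rpow_sub ha, rpow_two]
    field_simp
  calc ∫ t in Ioi a, t * exp (-α * t ^ r)
      ≤ exp (-α * a ^ r) * (1 / (α * r * a ^ (r - 2)) * (1 + 1 / (α * r * a ^ r))) :=
        hclosed ▸ integral_Ioi_mul_exp_neg_mul_rpow_le hα ha hr.le
    _ ≤ exp (-α * a ^ r) / (α * r * a ^ (r - 2)) * (1 + 2 / (α * r * a ^ r - 2)) := by
        rw [← mul_assoc, mul_one_div]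
        gcongr _ * (1 + ?_)
        exact one_div_le_two_div_sub_two (by linarith)
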